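/- arXiv:2310.05796 — 2 statements merged into one kernel-verified Lean document; each statement's English description precedes it below -/
import Mathlib

section
/- Let a > 0 and ρ₁, ρ₂ > 0 be real numbers, and let d be a real number with |ρ₁ − ρ₂| ≤ d ≤ ρ₁ + ρ₂. Then (cosh(a·d) − cosh(a·(ρ₁ − ρ₂))) / (2 · sinh(a·ρ₁) · sinh(a·ρ₂)) ≤ exp(−a·(ρ₁ + ρ₂ − d)). -/
/-!
Write `D = ρ₁ + ρ₂ - d` and `s = a D / 2`. Then `a d` and `a (ρ₁ - ρ₂)` are the sum and the difference
of `a ρ₁ - s` and `a ρ₂ - s`, so the numerator factors as `2 sinh (a ρ₁ - s) sinh (a ρ₂ - s)`, and each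
factor loses at least the factor `exp (-s)` against `sinh (a ρᵢ)`.
-/

namespace Real

theorem cosh_add_sub_cosh_sub (u v : ℝ) : cosh (u + v) - cosh (u - v) = 2 * sinh u * sinh v := by
  rw [cosh_add, cosh_sub]
  ring

/-- The defect is exactly `sinh s * exp (-u)`. -/
theorem sinh_sub_le_exp_neg_mul_sinh (u : ℝ) {s : ℝ} (hs : 0 ≤ s) :
    sinh (u - s) ≤ exp (-s) * sinh u := by
  have hexp : exp (-u - s) ≤ exp (s - u) := exp_le_exp.2 (by linarith)
  rw [sinh_eq, sinh_eq, neg_sub, mul_div_assoc', mul_sub, ← exp_add, ← exp_add]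
  rw [show -s + u = u - s by ring, show -s + -u = -u - s by ring]
  gcongr

theorem sinh_sub_mul_sinh_sub_le {u v s : ℝ} (hs : 0 ≤ s) (hu : s ≤ u) (hv : s ≤ v) :
    sinh (u - s) * sinh (v - s) ≤ exp (-(2 * s)) * (sinh u * sinh v) := by
  have hu' : 0 ≤ exp (-s) * sinh u := mul_nonneg (exp_pos _).le (sinh_nonneg_iff.2 (by linarith))
  calc sinh (u - s) * sinh (v - s)
      ≤ (exp (-s) * sinh u) * (exp (-s) * sinh v) :=
        mul_le_mul (sinh_sub_le_exp_neg_mul_sinh u hs) (sinh_sub_le_exp_neg_mul_sinh v hs)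
          (sinh_nonneg_iff.2 (by linarith)) hu'
    _ = exp (-(2 * s)) * (sinh u * sinh v) := by
        rw [show -(2 * s) = -s + -s by ring, exp_add]
        ring

end Real

theorem cosh_deficiency_bound_general (a ρ₁ ρ₂ d : ℝ) (ha : 0 < a)
    (hd₁ : |ρ₁ - ρ₂| ≤ d) (hd₂ : d ≤ ρ₁ + ρ₂) :
    (Real.cosh (a * d) - Real.cosh (a * (ρ₁ - ρ₂))) /
        (2 * Real.sinh (a * ρ₁) * Real.sinh (a * ρ₂)) ≤
      Real.exp (-(a * (ρ₁ + ρ₂ - d))) := by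
  obtain ⟨hlo, hhi⟩ := abs_le.1 hd₁
  set s := a * (ρ₁ + ρ₂ - d) / 2 with hs_def
  have hs : 0 ≤ s := by
    have : 0 ≤ ρ₁ + ρ₂ - d := by linarith
    positivity
  have hs₁ : s ≤ a * ρ₁ := by rw [hs_def]; nlinarith
  have hs₂ : s ≤ a * ρ₂ := by rw [hs_def]; nlinarith
  have hfactor : Real.cosh (a * d) - Real.cosh (a * (ρ₁ - ρ₂)) =
      2 * Real.sinh (a * ρ₁ - s) * Real.sinh (a * ρ₂ - s) := by
    rw [← Real.cosh_add_sub_cosh_sub]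
    congr 2 <;> ring
  have hden : 0 ≤ 2 * Real.sinh (a * ρ₁) * Real.sinh (a * ρ₂) := by
    have := Real.sinh_nonneg_iff.2 (hs.trans hs₁)
    have := Real.sinh_nonneg_iff.2 (hs.trans hs₂)
    positivity
  refine div_le_of_le_mul₀ hden (Real.exp_pos _).le ?_
  calc Real.cosh (a * d) - Real.cosh (a * (ρ₁ - ρ₂))
      = 2 * (Real.sinh (a * ρ₁ - s) * Real.sinh (a * ρ₂ - s)) := by rw [hfactor]; ring
    _ ≤ 2 * (Real.exp (-(2 * s)) * (Real.sinh (a * ρ₁) * Real.sinh (a * ρ₂))) :=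
        mul_le_mul_of_nonneg_left (Real.sinh_sub_mul_sinh_sub_le hs hs₁ hs₂) two_pos.le
    _ = Real.exp (-(a * (ρ₁ + ρ₂ - d))) * (2 * Real.sinh (a * ρ₁) * Real.sinh (a * ρ₂)) := by
        rw [show 2 * s = a * (ρ₁ + ρ₂ - d) by rw [hs_def]; ring]
        ring

theorem cosh_deficiency_bound (a ρ₁ ρ₂ d : ℝ) (ha : 0 < a) (h₁ : 0 < ρ₁) (h₂ : 0 < ρ₂)
    (hd₁ : |ρ₁ - ρ₂| ≤ d) (hd₂ : d ≤ ρ₁ + ρ₂) :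
    (Real.cosh (a * d) - Real.cosh (a * (ρ₁ - ρ₂))) /
        (2 * Real.sinh (a * ρ₁) * Real.sinh (a * ρ₂)) ≤
      Real.exp (-(a * (ρ₁ + ρ₂ - d))) :=
  cosh_deficiency_bound_general a ρ₁ ρ₂ d ha hd₁ hd₂
end

section
/- For every α ∈ (0, π) there exist constants C > 0 and R₀ > 0 with the following property. Let R ≥ R₀ and let γ ∈ (0, π − α) and β ∈ (0, π − α) be real numbers satisfying the two equations 1 = −cos(α)·cos(γ) + sin(α)·sin(γ)·cosh(R) and 1 = cos(β)·cos(γ) + sin(β)·sin(γ)·cosh(R). Then γ ≤ C·exp(−R) and β ≤ C·exp(−2R). -/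
open Real

set_option maxHeartbeats 1000000 in
theorem ideal_triangle_angle_decay (α : ℝ) (hα₀ : 0 < α) (hαπ : α < Real.pi) :
    ∃ C > 0, ∃ R₀ > 0, ∀ R ≥ R₀, ∀ γ β : ℝ,
      0 < γ → γ < Real.pi - α → 0 < β → β < Real.pi - α →
      1 = -Real.cos α * Real.cos γ + Real.sin α * Real.sin γ * Real.cosh R →
      1 = Real.cos β * Real.cos γ + Real.sin β * Real.sin γ * Real.cosh R →
      γ ≤ C * Real.exp (-R) ∧ β ≤ C * Real.exp (-2 * R) := by
  have hπ := Real.pi_pos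
  have hs : 0 < Real.sin α := Real.sin_pos_of_pos_of_lt_pi hα₀ hαπ
  have hs1 : Real.sin α ≤ 1 := Real.sin_le_one α
  have hca : 0 < Real.cos (α / 2) := by
    apply Real.cos_pos_of_mem_Ioo
    constructor <;> [linarith; linarith]
  set s := Real.sin α with hsdef
  refine ⟨4 * π / s ^ 2 + 4 * π ^ 3 / (s ^ 4 * Real.cos (α / 2)), by positivity,
    1, one_pos, ?_⟩
  intro R hR γ β hγ0 hγπ hβ0 hβπ h1 h2
  -- basic facts
  have hcoshR : Real.exp R / 2 ≤ Real.cosh R := by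
    rw [Real.cosh_eq]
    have := Real.exp_pos (-R)
    linarith
  have hcoshpos : 0 < Real.cosh R := Real.cosh_pos R
  have hsinγ : 0 < Real.sin γ := Real.sin_pos_of_pos_of_lt_pi hγ0 (by linarith)
  -- bound on sin γ
  have hb2 : s * Real.sin γ * Real.cosh R ≤ 2 := by
    have h1' : s * Real.sin γ * Real.cosh R = 1 + Real.cos α * Real.cos γ := by
      linear_combination -h1
    nlinarith [Real.neg_one_le_cos α, Real.cos_le_one α, Real.neg_one_le_cos γ,
      Real.cos_le_one γ]
  have hsinγle : Real.sin γ ≤ 4 * Real.exp (-R) / s := by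
    rw [le_div_iff₀ hs]
    have hE : Real.exp (-R) * Real.exp R = 1 := by
      rw [← Real.exp_add]; simp
    have h5 : s * Real.sin γ * (Real.exp R / 2) ≤ 2 := by
      have := mul_le_mul_of_nonneg_left hcoshR (le_of_lt (mul_pos hs hsinγ))
      linarith
    have h6 : s * Real.sin γ * (Real.exp R / 2) * (2 * Real.exp (-R)) ≤ 2 * (2 * Real.exp (-R)) :=
      mul_le_mul_of_nonneg_right h5 (by positivity)
    calc Real.sin γ * s = s * Real.sin γ * (Real.exp R / 2) * (2 * Real.exp (-R)) := by
          linear_combination (-(Real.sin γ * s)) * hE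
    _ ≤ 2 * (2 * Real.exp (-R)) := h6
    _ = 4 * Real.exp (-R) := by ring
  -- γ ≤ (π / s) * sin γ
  have hγsin : γ ≤ π / s * Real.sin γ := by
    rw [div_mul_eq_mul_div, le_div_iff₀ hs]
    rcases le_or_gt γ (π / 2) with hcase | hcase
    · have h := Real.mul_le_sin hγ0.le hcase
      have h2γ : 2 * γ ≤ π * Real.sin γ := by
        have h' := mul_le_mul_of_nonneg_left h hπ.le
        rw [show π * (2 / π * γ) = 2 * γ by field_simp] at h'
        exact h'
      have h7 : γ * s ≤ γ * 1 := mul_le_mul_of_nonneg_left hs1 hγ0.le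
      linarith
    · have hαlt : α < π / 2 := by linarith
      have hmono : s ≤ Real.sin (π - γ) := by
        apply Real.strictMonoOn_sin.monotoneOn ⟨by linarith, hαlt.le⟩
          ⟨by linarith, by linarith⟩ (by linarith)
      rw [Real.sin_pi_sub] at hmono
      have h7 : γ * s ≤ π * s := mul_le_mul_of_nonneg_right (by linarith) hs.le
      have h8 : π * s ≤ π * Real.sin γ := mul_le_mul_of_nonneg_left hmono hπ.le
      linarith
  have hγbound : γ ≤ 4 * π / s ^ 2 * Real.exp (-R) := by
    calc γ ≤ π / s * Real.sin γ := hγsin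
    _ ≤ π / s * (4 * Real.exp (-R) / s) := by
        apply mul_le_mul_of_nonneg_left hsinγle (by positivity)
    _ = 4 * π / s ^ 2 * Real.exp (-R) := by field_simp
  -- key identity from the two equations
  have E : Real.sin β * (1 + Real.cos α * Real.cos γ)
      = Real.sin α * (1 - Real.cos β * Real.cos γ) := by
    linear_combination Real.sin β * h1 - Real.sin α * h2
  have hkey : Real.sin α - Real.sin β = Real.cos γ * Real.sin (α + β) := by
    rw [Real.sin_add]; linear_combination -E
  -- half-angle form
  set sa := Real.sin (α / 2) with hsa'
  set ca := Real.cos (α / 2) with hca'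
  set sb := Real.sin (β / 2) with hsb'
  set cb := Real.cos (β / 2) with hcb'
  have pa : sa ^ 2 + ca ^ 2 = 1 := Real.sin_sq_add_cos_sq _
  have pb : sb ^ 2 + cb ^ 2 = 1 := Real.sin_sq_add_cos_sq _
  have hsain : Real.sin α = 2 * sa * ca := by
    have h : (2:ℝ) * (α / 2) = α := by ring
    rw [hsa', hca', ← Real.sin_two_mul, h]
  have hsbin : Real.sin β = 2 * sb * cb := by
    have h : (2:ℝ) * (β / 2) = β := by ring
    rw [hsb', hcb', ← Real.sin_two_mul, h]
  have hsabin : Real.sin (α + β) = 2 * (sa * cb + ca * sb) * (ca * cb - sa * sb) := by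
    rw [show α + β = 2 * ((α + β) / 2) by ring, Real.sin_two_mul,
      show (α + β) / 2 = α / 2 + β / 2 by ring, Real.sin_add, Real.cos_add]
  rw [hsain, hsbin, hsabin] at hkey
  -- positivity of cos ((α+β)/2)
  have hP : 0 < ca * cb - sa * sb := by
    have h : 0 < Real.cos (α / 2 + β / 2) := by
      apply Real.cos_pos_of_mem_Ioo
      constructor <;> [linarith; linarith]
    rwa [Real.cos_add] at h
  -- the cancelled identity
  have hcancel : 2 * ca * sb = (1 - Real.cos γ) * (sa * cb + ca * sb) := by
    have hmul : (2 * ca * sb) * (ca * cb - sa * sb)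
        = ((1 - Real.cos γ) * (sa * cb + ca * sb)) * (ca * cb - sa * sb) := by
      linear_combination (-1/2 : ℝ) * hkey + (sb * cb) * pa - (sa * ca) * pb
    exact mul_right_cancel₀ (ne_of_gt hP) hmul
  -- bound on sin (β/2)
  have hSle : sa * cb + ca * sb ≤ 1 := by
    have h := Real.sin_le_one (α / 2 + β / 2)
    rwa [Real.sin_add] at h
  have hδnn : 0 ≤ 1 - Real.cos γ := by linarith [Real.cos_le_one γ]
  have hsbδ : 2 * ca * sb ≤ 1 - Real.cos γ := by
    calc 2 * ca * sb = (1 - Real.cos γ) * (sa * cb + ca * sb) := hcancel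
    _ ≤ (1 - Real.cos γ) * 1 := by apply mul_le_mul_of_nonneg_left hSle hδnn
    _ = 1 - Real.cos γ := by ring
  -- 1 - cos γ ≤ γ²/2
  have hδγ : 1 - Real.cos γ ≤ γ ^ 2 / 2 := by
    have := Real.one_sub_sq_div_two_le_cos (x := γ)
    linarith
  -- β ≤ π * sb
  have hβsb : β / π ≤ sb := by
    have h := Real.mul_le_sin (x := β / 2) (by linarith) (by linarith)
    calc β / π = 2 / π * (β / 2) := by ring
    _ ≤ sb := h
  -- conclude
  have hβbound : β ≤ 4 * π ^ 3 / (s ^ 4 * ca) * Real.exp (-2 * R) := by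
    have hb1 : β ≤ π * sb := by
      rw [div_le_iff₀ hπ] at hβsb; linarith [mul_comm sb π]
    have hb2' : sb ≤ γ ^ 2 / (4 * ca) := by
      rw [le_div_iff₀ (by positivity)]
      have : sb * (4 * ca) = 2 * (2 * ca * sb) := by ring
      linarith
    have h3 : γ ^ 2 ≤ (4 * π / s ^ 2) ^ 2 * (Real.exp (-R)) ^ 2 := by
      have := pow_le_pow_left₀ hγ0.le hγbound 2
      calc γ ^ 2 ≤ (4 * π / s ^ 2 * Real.exp (-R)) ^ 2 := this
      _ = (4 * π / s ^ 2) ^ 2 * (Real.exp (-R)) ^ 2 := by ring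
    have h4 : (Real.exp (-R)) ^ 2 = Real.exp (-2 * R) := by
      rw [sq, ← Real.exp_add]; ring_nf
    calc β ≤ π * sb := hb1
    _ ≤ π * (γ ^ 2 / (4 * ca)) := by
        apply mul_le_mul_of_nonneg_left hb2' hπ.le
    _ ≤ π * ((4 * π / s ^ 2) ^ 2 * Real.exp (-2 * R) / (4 * ca)) := by
        rw [← h4]
        apply mul_le_mul_of_nonneg_left _ hπ.le
        exact div_le_div_of_nonneg_right h3 (by positivity) |>.trans_eq (by ring)
    _ = 4 * π ^ 3 / (s ^ 4 * ca) * Real.exp (-2 * R) := by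
        field_simp
  constructor
  · calc γ ≤ 4 * π / s ^ 2 * Real.exp (-R) := hγbound
    _ ≤ (4 * π / s ^ 2 + 4 * π ^ 3 / (s ^ 4 * ca)) * Real.exp (-R) := by
        have hpos : (0:ℝ) < 4 * π ^ 3 / (s ^ 4 * ca) := by positivity
        have := mul_le_mul_of_nonneg_right
          (le_add_of_nonneg_right hpos.le : 4 * π / s ^ 2 ≤ 4 * π / s ^ 2 + 4 * π ^ 3 / (s ^ 4 * ca))
          (Real.exp_pos (-R)).le
        linarith
  · calc β ≤ 4 * π ^ 3 / (s ^ 4 * ca) * Real.exp (-2 * R) := hβbound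
    _ ≤ (4 * π / s ^ 2 + 4 * π ^ 3 / (s ^ 4 * ca)) * Real.exp (-2 * R) := by
        have hpos : (0:ℝ) < 4 * π / s ^ 2 := by positivity
        have := mul_le_mul_of_nonneg_right
          (le_add_of_nonneg_left hpos.le : 4 * π ^ 3 / (s ^ 4 * ca) ≤ 4 * π / s ^ 2 + 4 * π ^ 3 / (s ^ 4 * ca))
          (Real.exp_pos (-2 * R)).le
        linarith
end
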